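/- arXiv:1712.01570 — 3 statements merged into one kernel-verified Lean document; each statement's English description precedes it below -/
import Mathlib

section
/- Let F be an atomless probability measure on ℝ supported in [q,Q] (0 ≤ q < Q), let ε ∈ (0,1), and let f(r) = r − (1/(1−ε)) ∫ max(r − c, 0) dF(c). If r* ∈ ℝ satisfies F((−∞, r*]) = 1 − ε, then f attains its global maximum over ℝ at r*, i.e., f(r) ≤ f(r*) for all r ∈ ℝ. -/
/-!
For each `c`, the map `r ↦ max (r - c) 0` is convex with slope `1` on `[c, ∞)`, so its increment
from `s` to `r` is at least `(r - s) · 1[c ≤ s]`. Integrating against `F` gives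
`∫ max (r - c) 0 ∂F - ∫ max (s - c) 0 ∂F ≥ (r - s) F((-∞, s])`;
at `s = r*` the right-hand side is `(1 - ε) (r - r*)`, which rearranges to `f r ≤ f r*`.
-/

open MeasureTheory

lemma indicator_Iic_le_max_sub_max (r s c : ℝ) :
    (Set.Iic s).indicator (fun _ => r - s) c ≤ max (r - c) 0 - max (s - c) 0 := by
  by_cases hc : c ≤ s
  · rw [Set.indicator_of_mem (Set.mem_Iic.2 hc), max_eq_left (sub_nonneg.2 hc)]
    linarith [le_max_left (r - c) 0]
  · rw [Set.indicator_of_notMem (mt Set.mem_Iic.1 hc),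
      max_eq_right (sub_nonpos.2 (le_of_not_ge hc))]
    simp

lemma integrable_max_sub_of_ae_le {μ : Measure ℝ} [IsFiniteMeasure μ] {q : ℝ}
    (hq : ∀ᵐ c ∂μ, q ≤ c) (r : ℝ) : Integrable (fun c => max (r - c) 0) μ := by
  refine (integrable_const (max (r - q) 0)).mono' (by fun_prop) ?_
  filter_upwards [hq] with c hc
  rw [Real.norm_of_nonneg (le_max_right _ _)]
  exact max_le_max_right 0 (by linarith)

lemma measureReal_Iic_mul_sub_le_integral_sub {μ : Measure ℝ} [IsFiniteMeasure μ] {r s : ℝ}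
    (hr : Integrable (fun c => max (r - c) 0) μ) (hs : Integrable (fun c => max (s - c) 0) μ) :
    μ.real (Set.Iic s) * (r - s) ≤ ∫ c, max (r - c) 0 ∂μ - ∫ c, max (s - c) 0 ∂μ := by
  rw [← integral_sub hr hs, ← smul_eq_mul, ← integral_indicator_const _ measurableSet_Iic]
  exact integral_mono ((integrable_const _).indicator measurableSet_Iic) (hr.sub hs)
    (indicator_Iic_le_max_sub_max r s)

theorem cvar_objective_max_at_quantile_general
    (q Q : ℝ)
    (F : Measure ℝ) [IsProbabilityMeasure F]
    (hsupp : F (Set.Icc q Q)ᶜ = 0)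
    (ε : ℝ) (hε : ε ∈ Set.Ioo (0 : ℝ) 1)
    (rstar : ℝ) (hquant : (F (Set.Iic rstar)).toReal = 1 - ε) :
    ∀ r : ℝ,
      r - (1 / (1 - ε)) * ∫ c, max (r - c) 0 ∂F ≤
        rstar - (1 / (1 - ε)) * ∫ c, max (rstar - c) 0 ∂F := by
  intro r
  have hq : ∀ᵐ c ∂F, q ≤ c :=
    ae_iff.2 (measure_mono_null (t := (Set.Icc q Q)ᶜ) (fun _ hc hmem => hc hmem.1) hsupp)
  have hgain := measureReal_Iic_mul_sub_le_integral_sub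
    (integrable_max_sub_of_ae_le hq r) (integrable_max_sub_of_ae_le hq rstar)
  rw [measureReal_def, hquant] at hgain
  have hpos : 0 < 1 - ε := sub_pos.2 hε.2
  set A := ∫ c, max (r - c) 0 ∂F
  set B := ∫ c, max (rstar - c) 0 ∂F
  have hslope : r - rstar ≤ 1 / (1 - ε) * (A - B) := by
    rwa [one_div_mul_eq_div, le_div_iff₀' hpos]
  linarith [mul_sub (1 / (1 - ε)) A B]

/-- Let `F` be an atomless probability measure supported in `[q, Q]` (with `0 ≤ q < Q`),
`ε ∈ (0,1)`, and `f r = r - (1/(1-ε)) * ∫ max (r - c) 0 ∂F`. If `F((-∞, r*]) = 1 - ε`,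
then `f` attains its global maximum over `ℝ` at `r*`. -/
theorem cvar_objective_max_at_quantile
    (q Q : ℝ) (hq : 0 ≤ q) (hqQ : q < Q)
    (F : Measure ℝ) [IsProbabilityMeasure F] [NullSingletonClass F]
    (hsupp : F (Set.Icc q Q)ᶜ = 0)
    (ε : ℝ) (hε : ε ∈ Set.Ioo (0 : ℝ) 1)
    (rstar : ℝ) (hquant : (F (Set.Iic rstar)).toReal = 1 - ε) :
    ∀ r : ℝ,
      r - (1 / (1 - ε)) * ∫ c, max (r - c) 0 ∂F ≤
        rstar - (1 / (1 - ε)) * ∫ c, max (rstar - c) 0 ∂F :=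
  cvar_objective_max_at_quantile_general q Q F hsupp ε hε rstar hquant
end

section
/- Fix real numbers r, M and Q with 0 ≤ r ≤ Q ≤ M, and a positive integer T. Suppose the vectors c, z ∈ ℝ^T and y ∈ {0,1}^T satisfy, for every i = 1,…,T: c_i ≥ 0, z_i ≥ 0, c_i − r + z_i ≥ 0, r − c_i + M·y_i ≥ 0, z_i ≤ M·(1 − y_i), and z_i − (r − c_i)·(1 − y_i) ≤ 0. Then z_i = max(r − c_i, 0) for every i. -/
/-- In the MIP reformulation of nature's problem, the constraints force
`z i = max (r - c i) 0` for every `i`. -/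
theorem mip_forces_z_eq_max
    (r M Q : ℝ) (hr0 : 0 ≤ r) (hrQ : r ≤ Q) (hQM : Q ≤ M)
    (T : ℕ) (hT : 0 < T)
    (c z y : Fin T → ℝ)
    (hy : ∀ i, y i = 0 ∨ y i = 1)
    (hc : ∀ i, 0 ≤ c i)
    (hz : ∀ i, 0 ≤ z i)
    (h1 : ∀ i, c i - r + z i ≥ 0)
    (h2 : ∀ i, r - c i + M * y i ≥ 0)
    (h3 : ∀ i, z i ≤ M * (1 - y i))
    (h4 : ∀ i, z i - (r - c i) * (1 - y i) ≤ 0) :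
    ∀ i, z i = max (r - c i) 0 := by
  intro i
  rcases hy i with h | h
  · have h1' := h1 i
    have h4' := h4 i
    rw [h] at h4'
    have hze : z i = r - c i := by nlinarith
    rw [hze, max_eq_left]
    linarith [hz i, hze]
  · have h3' := h3 i
    rw [h] at h3'
    have hz0 : z i = 0 := by nlinarith [hz i]
    have h1' := h1 i
    rw [hz0] at h1'
    rw [hz0, max_eq_right]
    linarith
end

section
/- Let r be a real number, let 0 ≤ r₁ < r₂ ≤ r₃ be real numbers with r ≥ r₂, and let p₁, p₂, p₃ > 0 with p₁ + p₂ + p₃ = 1. Set z = (p₁·r₁ + p₂·r₂)/(p₁ + p₂) and define g(x) = min(x, r). Then: (i) r₁ < z < r₂; (ii) the two-point distribution placing mass p₁ + p₂ at z and mass p₃ at r₃ has the same mean as the three-point distribution placing masses p₁, p₂, p₃ at r₁, r₂, r₃, i.e., (p₁+p₂)·z + p₃·r₃ = p₁·r₁ + p₂·r₂ + p₃·r₃; (iii) its second moment is no larger: (p₁+p₂)·z² + p₃·r₃² ≤ p₁·r₁² + p₂·r₂² + p₃·r₃² (hence its variance is no larger); and (iv) its expected user cost is no larger: (p₁+p₂)·g(z)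 + p₃·g(r₃) ≤ p₁·g(r₁) + p₂·g(r₂) + p₃·g(r₃). -/
/-- Any three-point distribution on `{r₁, r₂, r₃}` with `r₁ < r₂ ≤ r₃`, `r ≥ r₂`, and
probabilities `p₁, p₂, p₃` can be replaced by the two-point distribution on
`{z, r₃}` with `z = (p₁ r₁ + p₂ r₂)/(p₁ + p₂)`: (i) `r₁ < z < r₂`; (ii) the mean is
preserved; (iii) the second moment does not increase; (iv) the expected user cost
`E[g]` with `g x = min x r` does not increase. -/
theorem two_point_dominates_three_point
    (r r₁ r₂ r₃ p₁ p₂ p₃ : ℝ)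
    (hr₁ : 0 ≤ r₁) (h₁₂ : r₁ < r₂) (h₂₃ : r₂ ≤ r₃) (hr : r₂ ≤ r)
    (hp₁ : 0 < p₁) (hp₂ : 0 < p₂) (hp₃ : 0 < p₃)
    (hsum : p₁ + p₂ + p₃ = 1)
    (z : ℝ) (hz : z = (p₁ * r₁ + p₂ * r₂) / (p₁ + p₂))
    (g : ℝ → ℝ) (hg : ∀ x, g x = min x r) :
    (r₁ < z ∧ z < r₂) ∧
      (p₁ + p₂) * z + p₃ * r₃ = p₁ * r₁ + p₂ * r₂ + p₃ * r₃ ∧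
      (p₁ + p₂) * z ^ 2 + p₃ * r₃ ^ 2 ≤ p₁ * r₁ ^ 2 + p₂ * r₂ ^ 2 + p₃ * r₃ ^ 2 ∧
      (p₁ + p₂) * g z + p₃ * g r₃ ≤ p₁ * g r₁ + p₂ * g r₂ + p₃ * g r₃ := by
  have hpp : 0 < p₁ + p₂ := by linarith
  have hmul : (p₁ + p₂) * z = p₁ * r₁ + p₂ * r₂ := by
    rw [hz]; field_simp
  have h1 : r₁ < z := by
    rw [hz, lt_div_iff₀ hpp]; nlinarith
  have h2 : z < r₂ := by
    rw [hz, div_lt_iff₀ hpp]; nlinarith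
  refine ⟨⟨h1, h2⟩, by linarith, ?_, ?_⟩
  · nlinarith [mul_nonneg hp₁.le (sq_nonneg (r₁ - z)), mul_nonneg hp₂.le (sq_nonneg (r₂ - z)), hmul]
  · have gz : g z = z := by rw [hg]; exact min_eq_left (by linarith)
    have g1 : g r₁ = r₁ := by rw [hg]; exact min_eq_left (by linarith)
    have g2 : g r₂ = r₂ := by rw [hg]; exact min_eq_left (by linarith)
    rw [gz, g1, g2]; linarith
end
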